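/- Let z ∈ [0, 1] and take the five-point scheme with parameters σ = z(1 − z²)/6 and τ = −σ/2 = −z(1 − z²)/12 (a skewed four-point, third-order accurate scheme). If Φ : ℤ → ℝ is square-summable, then the sequence Ψ with Ψ_j := (A(z)Φ)_j is square-summable and ∑_{j∈ℤ} Ψ_j² ≤ ∑_{j∈ℤ} Φ_j²; that is, A(z) is a contraction on ℓ²(ℤ). -/

import Mathlib

/-- Backward difference `(DΦ)_j = Φ_j - Φ_{j-1}`. -/
noncomputable def Dd (Φ : ℤ → ℝ) (j : ℤ) : ℝ := Φ j - Φ (j - 1)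

/-- Centered difference `(D₀Φ)_j = (Φ_{j+1} - Φ_{j-1})/2`. -/
noncomputable def D0 (Φ : ℤ → ℝ) (j : ℤ) : ℝ := (Φ (j + 1) - Φ (j - 1)) / 2

/-- Discrete Laplacian `(ΔΦ)_j = Φ_{j-1} - 2Φ_j + Φ_{j+1}`. -/
noncomputable def Lap (Φ : ℤ → ℝ) (j : ℤ) : ℝ := Φ (j - 1) - 2 * Φ j + Φ (j + 1)

/-- `(DΔΦ)_j = (ΔΦ)_j - (ΔΦ)_{j-1}`. -/
noncomputable def DLap (Φ : ℤ → ℝ) (j : ℤ) : ℝ := Lap Φ j - Lap Φ (j - 1)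

/-- `(D₀ΔΦ)_j = (-Φ_{j-2} + 2Φ_{j-1} - 2Φ_{j+1} + Φ_{j+2})/2`. -/
noncomputable def D0Lap (Φ : ℤ → ℝ) (j : ℤ) : ℝ :=
  (-Φ (j - 2) + 2 * Φ (j - 1) - 2 * Φ (j + 1) + Φ (j + 2)) / 2

/-- `(Δ²Φ)_j = Φ_{j-2} - 4Φ_{j-1} + 6Φ_j - 4Φ_{j+1} + Φ_{j+2}`. -/
noncomputable def Lap2 (Φ : ℤ → ℝ) (j : ℤ) : ℝ :=
  Φ (j - 2) - 4 * Φ (j - 1) + 6 * Φ j - 4 * Φ (j + 1) + Φ (j + 2)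

/-- The five point scheme `A(z)Φ = Φ - z D₀Φ + (z²/2) ΔΦ + σ D₀ΔΦ + τ Δ²Φ`. -/
noncomputable def A5 (z σ τ : ℝ) (Φ : ℤ → ℝ) (j : ℤ) : ℝ :=
  Φ j - z * D0 Φ j + z ^ 2 / 2 * Lap Φ j + σ * D0Lap Φ j + τ * Lap2 Φ j

/-
Every sequence occurring here is a four-point stencil applied to `Φ`, and the sum of squares of
any stencil is a linear combination of the autocorrelations `∑ⱼ Φⱼ Φⱼ₊ₘ`, `m = 0, …, 3`, with
coefficients quadratic in the stencil weights. Comparing these coefficients gives the energy identity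
`‖A(z)Φ‖² = ‖Φ‖² - B ‖ΔΦ‖² - C ‖DΔΦ‖²` with `B = z(1 - z²)(2 - z)/12` and
`C = z²(1 - z²)(1 - z)(2 - z)/36`, both nonnegative for `z ∈ [0, 1]`.
-/

lemma Summable.mul_of_sq {ι : Type*} {f g : ι → ℝ} (hf : Summable fun i => f i ^ 2)
    (hg : Summable fun i => g i ^ 2) : Summable fun i => f i * g i := by
  refine Summable.of_norm_bounded ((hf.add hg).div_const 2) fun i => ?_
  rw [Real.norm_eq_abs, abs_mul, le_div_iff₀ two_pos, ← sq_abs (f i), ← sq_abs (g i)]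
  linarith [two_mul_le_add_sq |f i| |g i|]

section Autocorrelation

variable {G : Type*} [AddCommGroup G] {Φ : G → ℝ}

noncomputable def autocorr (Φ : G → ℝ) (m : G) : ℝ := ∑' j, Φ j * Φ (j + m)

lemma Summable.sq_comp_add_right (hΦ : Summable fun j => Φ j ^ 2) (a : G) :
    Summable fun j => Φ (j + a) ^ 2 :=
  (Equiv.addRight a).summable_iff (f := fun j => Φ j ^ 2) |>.mpr hΦ

lemma tsum_mul_comp_add (a b : G) :
    ∑' j, Φ (j + a) * Φ (j + b) = autocorr Φ (b - a) := by
  rw [autocorr, ← (Equiv.addRight a).tsum_eq (fun j => Φ j * Φ (j + (b - a)))]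
  simp only [Equiv.coe_addRight, add_assoc, add_sub_cancel]

lemma autocorr_neg (m : G) : autocorr Φ (-m) = autocorr Φ m := by
  calc autocorr Φ (-m) = ∑' j, Φ (j + m) * Φ (j + 0) := by rw [tsum_mul_comp_add, zero_sub]
    _ = ∑' j, Φ (j + 0) * Φ (j + m) := by simp only [mul_comm]
    _ = autocorr Φ m := by rw [tsum_mul_comp_add, sub_zero]

variable {ι : Type*} [Fintype ι] (w : ι → ℝ) (o : ι → G)

noncomputable def stencil (Φ : G → ℝ) (j : G) : ℝ := ∑ i, w i * Φ (j + o i)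

lemma sq_stencil (j : G) :
    stencil w o Φ j ^ 2 = ∑ i, ∑ k, w i * w k * (Φ (j + o i) * Φ (j + o k)) := by
  rw [stencil, sq, Finset.sum_mul_sum]
  simp only [mul_mul_mul_comm]

lemma summable_sq_stencil (hΦ : Summable fun j => Φ j ^ 2) :
    Summable fun j => stencil w o Φ j ^ 2 := by
  simp only [sq_stencil]
  exact summable_sum fun i _ => summable_sum fun k _ =>
    ((hΦ.sq_comp_add_right _).mul_of_sq (hΦ.sq_comp_add_right _)).mul_left _

lemma tsum_sq_stencil (hΦ : Summable fun j => Φ j ^ 2) :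
    ∑' j, stencil w o Φ j ^ 2 = ∑ i, ∑ k, w i * w k * autocorr Φ (o k - o i) := by
  have hterm : ∀ i k, Summable fun j => w i * w k * (Φ (j + o i) * Φ (j + o k)) := fun i k =>
    ((hΦ.sq_comp_add_right _).mul_of_sq (hΦ.sq_comp_add_right _)).mul_left _
  simp only [sq_stencil]
  rw [Summable.tsum_finsetSum fun i _ => summable_sum fun k _ => hterm i k]
  refine Finset.sum_congr rfl fun i _ => ?_
  rw [Summable.tsum_finsetSum fun k _ => hterm i k]
  simp only [tsum_mul_left, tsum_mul_comp_add]

end Autocorrelation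

lemma summable_sq_and_tsum_sq_of_fourPoint {Φ Ψ : ℤ → ℝ} (hΦ : Summable fun j => Φ j ^ 2)
    (a b c d : ℝ) (hΨ : ∀ j, Ψ j = a * Φ (j - 2) + b * Φ (j - 1) + c * Φ j + d * Φ (j + 1)) :
    Summable (fun j => Ψ j ^ 2) ∧
      ∑' j, Ψ j ^ 2 = (a ^ 2 + b ^ 2 + c ^ 2 + d ^ 2) * autocorr Φ 0
        + 2 * (a * b + b * c + c * d) * autocorr Φ 1 + 2 * (a * c + b * d) * autocorr Φ 2
        + 2 * (a * d) * autocorr Φ 3 := by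
  have hstencil : Ψ = stencil ![a, b, c, d] ![-2, -1, 0, 1] Φ := by
    funext j
    simp [stencil, Fin.sum_univ_four, hΨ, sub_eq_add_neg]
  subst hstencil
  refine ⟨summable_sq_stencil _ _ hΦ, ?_⟩
  rw [tsum_sq_stencil _ _ hΦ]
  simp only [Fin.sum_univ_four, Matrix.cons_val]
  norm_num [autocorr_neg]
  ring

section SkewedScheme

variable (z : ℝ) {Φ : ℤ → ℝ}

lemma A5_skewed_apply (j : ℤ) :
    A5 z (z * (1 - z ^ 2) / 6) (-(z * (1 - z ^ 2) / 6) / 2) Φ j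
      = (-z / 6 + z ^ 3 / 6) * Φ (j - 2) + (z + z ^ 2 / 2 - z ^ 3 / 2) * Φ (j - 1)
        + (1 - z / 2 - z ^ 2 + z ^ 3 / 2) * Φ j + (-z / 3 + z ^ 2 / 2 - z ^ 3 / 6) * Φ (j + 1) := by
  simp only [A5, D0, Lap, D0Lap, Lap2]
  ring

lemma tsum_sq_A5_skewed (hΦ : Summable fun j => Φ j ^ 2) :
    ∑' j, A5 z (z * (1 - z ^ 2) / 6) (-(z * (1 - z ^ 2) / 6) / 2) Φ j ^ 2
      = ∑' j, Φ j ^ 2 - z * (1 - z ^ 2) * (2 - z) / 12 * ∑' j, Lap Φ j ^ 2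
        - z ^ 2 * (1 - z ^ 2) * (1 - z) * (2 - z) / 36 * ∑' j, DLap Φ j ^ 2 := by
  rw [(summable_sq_and_tsum_sq_of_fourPoint hΦ _ _ _ _ (A5_skewed_apply z)).2,
    (summable_sq_and_tsum_sq_of_fourPoint (Ψ := Φ) hΦ 0 0 1 0 fun j => by ring).2,
    (summable_sq_and_tsum_sq_of_fourPoint hΦ 0 1 (-2) 1 fun j => by simp only [Lap]; ring).2,
    (summable_sq_and_tsum_sq_of_fourPoint hΦ (-1) 3 (-3) 1 fun j => by simp only [DLap, Lap]; ring_nf).2]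
  ring

end SkewedScheme

/-- The skewed four-point third order scheme `σ = z(1 - z²)/6`, `τ = -σ/2` is a
contraction on `ℓ²(ℤ)` for `z ∈ [0, 1]`. -/
theorem five_point_upwind_like_contraction (z : ℝ) (hz : z ∈ Set.Icc (0 : ℝ) 1)
    (Φ : ℤ → ℝ) (hΦ : Summable (fun j : ℤ => (Φ j) ^ 2)) :
    Summable (fun j : ℤ => (A5 z (z * (1 - z ^ 2) / 6) (-(z * (1 - z ^ 2) / 6) / 2) Φ j) ^ 2) ∧
      ∑' j : ℤ, (A5 z (z * (1 - z ^ 2) / 6) (-(z * (1 - z ^ 2) / 6) / 2) Φ j) ^ 2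
        ≤ ∑' j : ℤ, (Φ j) ^ 2 := by
  obtain ⟨hz0, hz1⟩ := hz
  refine ⟨(summable_sq_and_tsum_sq_of_fourPoint hΦ _ _ _ _ (A5_skewed_apply z)).1, ?_⟩
  have h1 : 0 ≤ 1 - z := by linarith
  have h2 : 0 ≤ 2 - z := by linarith
  have h1sq : 0 ≤ 1 - z ^ 2 := by nlinarith
  have hB : 0 ≤ z * (1 - z ^ 2) * (2 - z) / 12 := by positivity
  have hC : 0 ≤ z ^ 2 * (1 - z ^ 2) * (1 - z) * (2 - z) / 36 := by positivity
  have hLap : 0 ≤ ∑' j, Lap Φ j ^ 2 := tsum_nonneg fun j => sq_nonneg _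
  have hDLap : 0 ≤ ∑' j, DLap Φ j ^ 2 := tsum_nonneg fun j => sq_nonneg _
  rw [tsum_sq_A5_skewed z hΦ]
  linarith [mul_nonneg hB hLap, mul_nonneg hC hDLap]
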